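/- arXiv:2102.09879 — 2 statements merged into one kernel-verified Lean document; each statement's English description precedes it below -/
import Mathlib

section
/- Let G = (V,E) be the complete graph on N vertices with injective positive edge weights, let p ∈ (0,1], and let 2 ≤ n ≤ N. Let E' ⊆ E be a random edge set in which each edge of E is included independently with probability p; let G' = (V, E') have unique minimum spanning forest T' and K' connected components. Independently, let S be a uniformly random n-element subset of V; let G'_S = (S, E'_S) be the subgraph of G' induced by S (E'_S = E' ∩ E_S, where E_S is the set of edges of E with both endpoints in S), with unique minimum spanning forest T'_S and K'_S connected components. Let e be an edge chosen uniformly at random from E, independently of E' and S. Then P(e ∈ T' | e ∈ T'_S) = (n(n−1))/(N(N−1)) · (N − E(K'))/(n − E(K'_S)). -/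
/-!
A spanning forest of a graph with `K` components on `N` vertices has `N - K` edges, so
`E|T'| = N - E(K')`; the vertices outside `S` are isolated in the graph carrying `T'_S`, so
likewise `E|T'_S| = n - E(K'_S)`. With injective weights, an edge of the minimum spanning forest
of a graph stays in the minimum spanning forest of every subgraph containing it: the path joining
its endpoints in the smaller forest consists of lighter edges (cycle property), whereas every walk
joining them in the larger graph has an edge at least as heavy (cut property). Hence `T' ∩ T'_S` is
the set of edges of `T'` with both endpoints in `S`. Each edge lies inside exactly `C(N-2, n-2)`
of the `n`-subsets `S`, and `C(N-2, n-2) / C(N, n) = n(n-1) / (N(N-1))`.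
-/

/-- `T` is a spanning forest of `G`. -/
def IsSpanningForest {V : Type*} (G : SimpleGraph V) (T : Finset (Sym2 V)) : Prop :=
  (T : Set (Sym2 V)) ⊆ G.edgeSet ∧
    (SimpleGraph.fromEdgeSet (T : Set (Sym2 V))).IsAcyclic ∧
    ∀ u v : V, G.Reachable u v → (SimpleGraph.fromEdgeSet (T : Set (Sym2 V))).Reachable u v

/-- `T` is a minimum spanning forest of `G` with respect to the weights `w`. -/
def IsMSF {V : Type*} (G : SimpleGraph V) (w : Sym2 V → ℝ) (T : Finset (Sym2 V)) : Prop :=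
  IsSpanningForest G T ∧
    ∀ T' : Finset (Sym2 V), IsSpanningForest G T' → ∑ e ∈ T, w e ≤ ∑ e ∈ T', w e

/-- The set of edges of `E'` having both endpoints in `S`. -/
def edgesWithin {V : Type*} (E' : Finset (Sym2 V)) (S : Finset V) : Set (Sym2 V) :=
  {e ∈ (E' : Set (Sym2 V)) | ∀ v ∈ e, v ∈ S}

open SimpleGraph

namespace SimpleGraph

variable {V : Type*}

lemma reachable_le_of_adj_le {H K : SimpleGraph V} (h : H.Adj ≤ K.Reachable) :
    H.Reachable ≤ K.Reachable := by
  rw [reachable_eq_reflTransGen]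
  exact Relation.reflTransGen_le_of_equivalence_of_le K.reachable_is_equivalence h

lemma fromEdgeSet_insert (s : Set (Sym2 V)) (x y : V) :
    fromEdgeSet (insert s(x, y) s) = fromEdgeSet s ⊔ edge x y := by
  rw [edge, Set.insert_eq, Set.union_comm, fromEdgeSet_union]

lemma reachable_sup_edge_iff {K : SimpleGraph V} {u v x y : V} :
    (K ⊔ edge u v).Reachable x y ↔ K.Reachable x y ∨
      K.Reachable x u ∧ K.Reachable v y ∨ K.Reachable x v ∧ K.Reachable u y := by
  constructor
  · rintro ⟨p⟩
    induction p with
    | nil => exact Or.inl .rfl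
    | @cons x z y hxz _ ih =>
      rcases (sup_adj ..).mp hxz with hK | hE
      · have := hK.reachable
        rcases ih with h | ⟨h1, h2⟩ | ⟨h1, h2⟩
        · exact Or.inl (this.trans h)
        · exact Or.inr (Or.inl ⟨this.trans h1, h2⟩)
        · exact Or.inr (Or.inr ⟨this.trans h1, h2⟩)
      rw [edge_adj] at hE
      rcases hE with ⟨⟨rfl, rfl⟩ | ⟨rfl, rfl⟩, -⟩
      · rcases ih with h | ⟨h1, h2⟩ | ⟨h1, h2⟩
        · exact Or.inr (Or.inl ⟨.rfl, h⟩)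
        · exact Or.inr (Or.inl ⟨.rfl, h2⟩)
        · exact Or.inl h2
      · rcases ih with h | ⟨h1, h2⟩ | ⟨h1, h2⟩
        · exact Or.inr (Or.inr ⟨.rfl, h⟩)
        · exact Or.inl h2
        · exact Or.inr (Or.inr ⟨.rfl, h2⟩)
  · have hle : K ≤ K ⊔ edge u v := le_sup_left
    have huv : (K ⊔ edge u v).Reachable u v := by
      by_cases h : u = v
      · exact h ▸ .rfl
      · exact Adj.reachable ((sup_adj ..).mpr (Or.inr ((edge_adj ..).mpr ⟨Or.inl ⟨rfl, rfl⟩, h⟩)))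
    rintro (h | ⟨h1, h2⟩ | ⟨h1, h2⟩)
    · exact h.mono hle
    · exact (h1.mono hle).trans (huv.trans (h2.mono hle))
    · exact (h1.mono hle).trans (huv.symm.trans (h2.mono hle))

lemma card_connectedComponent_sup_edge [Finite V] {K : SimpleGraph V} {u v : V}
    (huv : ¬K.Reachable u v) :
    Nat.card (K ⊔ edge u v).ConnectedComponent + 1 = Nat.card K.ConnectedComponent := by
  classical
  let f (c : {c : K.ConnectedComponent // c ≠ K.connectedComponentMk v}) :
      (K ⊔ edge u v).ConnectedComponent := c.1.map (Hom.ofLE le_sup_left)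
  have hf : f.Bijective := by
    refine ⟨fun ⟨c₁, hc₁⟩ ⟨c₂, hc₂⟩ h => ?_, fun c => ?_⟩
    · induction c₁ using ConnectedComponent.ind with | h x =>
      induction c₂ using ConnectedComponent.ind with | h y =>
      have hx : ¬K.Reachable x v := fun h => hc₁ (ConnectedComponent.sound h)
      have hy : ¬K.Reachable y v := fun h => hc₂ (ConnectedComponent.sound h)
      rcases reachable_sup_edge_iff.mp (ConnectedComponent.exact h) with h | ⟨-, h⟩ | ⟨h, -⟩
      · exact Subtype.ext (ConnectedComponent.sound h)
      · exact absurd h.symm hy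
      · exact absurd h hx
    · induction c using ConnectedComponent.ind with | h x =>
      by_cases hx : K.Reachable x v
      · refine ⟨⟨K.connectedComponentMk u, fun h => huv (ConnectedComponent.exact h)⟩, ?_⟩
        exact ConnectedComponent.sound
          (reachable_sup_edge_iff.mpr (Or.inr (Or.inl ⟨.rfl, hx.symm⟩)))
      · exact ⟨⟨K.connectedComponentMk x, fun h => hx (ConnectedComponent.exact h)⟩, rfl⟩
  rw [← Nat.card_congr (Equiv.ofBijective f hf), ← Finite.card_option,
    Nat.card_congr (Equiv.optionSubtypeNe _)]

lemma reachable_le_sup_edge_of_reachable {K : SimpleGraph V} {x y c d : V}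
    (h : (K ⊔ edge c d).Reachable x y) :
    (K ⊔ edge x y).Reachable ≤ (K ⊔ edge c d).Reachable := by
  refine reachable_le_of_adj_le fun a b hab => ?_
  rcases (sup_adj ..).mp hab with hK | hE
  · exact hK.reachable.mono le_sup_left
  · rw [edge_adj] at hE
    rcases hE with ⟨⟨rfl, rfl⟩ | ⟨rfl, rfl⟩, -⟩
    exacts [h, h.symm]

lemma card_connectedComponent_eq_of_le {H K : SimpleGraph V} (hle : H ≤ K)
    (hreach : K.Reachable ≤ H.Reachable) :
    Nat.card H.ConnectedComponent = Nat.card K.ConnectedComponent := by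
  refine Nat.card_eq_of_bijective _ ⟨fun c₁ c₂ h => ?_, ConnectedComponent.surjective_map_ofLE hle⟩
  induction c₁ using ConnectedComponent.ind with | h x =>
  induction c₂ using ConnectedComponent.ind with | h y =>
  exact ConnectedComponent.sound (hreach _ _ (ConnectedComponent.exact h))

lemma card_connectedComponent_bot :
    Nat.card (⊥ : SimpleGraph V).ConnectedComponent = Nat.card V := by
  refine (Nat.card_eq_of_bijective (⊥ : SimpleGraph V).connectedComponentMk
    ⟨fun x y h => ?_, fun c => ?_⟩).symm
  · exact reachable_bot.mp (ConnectedComponent.exact h)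
  · induction c using ConnectedComponent.ind with | h x => exact ⟨x, rfl⟩

lemma not_reachable_of_isAcyclic_insert [DecidableEq V] {T : Finset (Sym2 V)} {x y : V}
    (hxy : x ≠ y) (hT : (fromEdgeSet (↑(insert s(x, y) T) : Set (Sym2 V))).IsAcyclic)
    (hnot : s(x, y) ∉ T) :
    ¬(fromEdgeSet (T : Set (Sym2 V))).Reachable x y := by
  rw [Finset.coe_insert, fromEdgeSet_insert, isAcyclic_sup_fromEdgeSet_iff] at hT
  intro h
  rcases hT.2 h with h | h
  · exact hxy h
  · exact hnot ((fromEdgeSet_adj _).mp h).1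

lemma card_add_card_connectedComponent_of_isAcyclic [Fintype V] {T : Finset (Sym2 V)}
    (hdiag : ∀ e ∈ T, ¬e.IsDiag) (hT : (fromEdgeSet (T : Set (Sym2 V))).IsAcyclic) :
    T.card + Nat.card (fromEdgeSet (T : Set (Sym2 V))).ConnectedComponent = Fintype.card V := by
  classical
  induction T using Finset.induction_on with
  | empty =>
    rw [Finset.coe_empty, fromEdgeSet_empty, card_connectedComponent_bot, Finset.card_empty,
      zero_add, Nat.card_eq_fintype_card]
  | @insert e T he ih =>
    induction e using Sym2.ind with | h x y =>
    have hxy : x ≠ y := fun h => hdiag _ (Finset.mem_insert_self _ _) (Sym2.mk_isDiag_iff.mpr h)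
    have hcut := not_reachable_of_isAcyclic_insert hxy hT he
    rw [Finset.coe_insert, fromEdgeSet_insert] at hT ⊢
    rw [Finset.card_insert_of_notMem he, ← ih (fun e he => hdiag e (Finset.mem_insert_of_mem he))
      (hT.anti le_sup_left), ← card_connectedComponent_sup_edge hcut]
    ring

lemma Reachable.eq_of_notMem {H : SimpleGraph V} {s : Set V} (hH : ∀ a b, H.Adj a b → a ∈ s)
    {x y : V} (h : H.Reachable x y) (hy : y ∉ s) : x = y := by
  by_contra hne
  obtain ⟨z, hz⟩ := h.nonempty_neighborSet_right hne
  exact hy (hH _ _ hz)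

lemma Reachable.induce_of_forall_adj_mem {H : SimpleGraph V} {s : Set V}
    (hH : ∀ a b, H.Adj a b → a ∈ s) {x y : s} (h : H.Reachable x y) :
    (H.induce s).Reachable x y := by
  obtain ⟨p⟩ := h
  have hsupp : ∀ z ∈ p.support, z ∈ s := fun z hz => by
    by_cases hp : p.Nil
    · rw [Walk.nil_iff_support_eq] at hp
      rw [hp, List.mem_singleton] at hz
      exact hz ▸ x.2
    · obtain ⟨_, -, hadj⟩ := adj_of_mem_walk_support p hp hz
      exact hH _ _ hadj
  exact ⟨p.induce s hsupp⟩

lemma card_connectedComponent_eq_card_induce_add [Fintype V] {H : SimpleGraph V} {s : Finset V}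
    (hH : ∀ a b, H.Adj a b → a ∈ s) :
    Nat.card H.ConnectedComponent =
      Nat.card (H.induce (s : Set V)).ConnectedComponent + (Fintype.card V - s.card) := by
  classical
  let Φ : (H.induce (s : Set V)).ConnectedComponent ⊕ {v : V // v ∉ s} → H.ConnectedComponent :=
    Sum.elim (ConnectedComponent.map (Embedding.induce (s : Set V)).toHom)
      (fun v => H.connectedComponentMk v)
  have hΦ : Φ.Bijective := by
    refine ⟨?_, fun c => ?_⟩
    · rintro (c₁ | ⟨v₁, hv₁⟩) (c₂ | ⟨v₂, hv₂⟩) h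
      · induction c₁ using ConnectedComponent.ind with | h x =>
        induction c₂ using ConnectedComponent.ind with | h y =>
        exact congrArg Sum.inl (ConnectedComponent.sound
          ((ConnectedComponent.exact h).induce_of_forall_adj_mem hH))
      · induction c₁ using ConnectedComponent.ind with | h x =>
        obtain rfl := (ConnectedComponent.exact h).eq_of_notMem hH hv₂
        exact absurd x.2 hv₂
      · induction c₂ using ConnectedComponent.ind with | h y =>
        obtain rfl := (ConnectedComponent.exact h).symm.eq_of_notMem hH hv₁
        exact absurd y.2 hv₁
      · exact congrArg Sum.inr (Subtype.ext ((ConnectedComponent.exact h).eq_of_notMem hH hv₂))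
    · induction c using ConnectedComponent.ind with | h x =>
      by_cases hx : x ∈ s
      · exact ⟨Sum.inl ((H.induce (s : Set V)).connectedComponentMk ⟨x, hx⟩), rfl⟩
      · exact ⟨Sum.inr ⟨x, hx⟩, rfl⟩
  rw [← Nat.card_eq_of_bijective Φ hΦ, Nat.card_sum, Nat.card_eq_fintype_card (α := {v // v ∉ s}),
    Fintype.card_subtype_compl, Fintype.card_coe]

lemma IsAcyclic.not_reachable_deleteEdges_of_mem_edges {F : SimpleGraph V} (hF : F.IsAcyclic)
    {a b x y : V} {p : F.Walk a b} (hp : p.IsPath) (hxy : s(x, y) ∈ p.edges) :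
    ¬(F.deleteEdges {s(x, y)}).Reachable a b := by
  classical
  rw [reachable_deleteEdges_iff_exists_walk]
  rintro ⟨q, hq⟩
  have hpq : p = q.bypass :=
    congrArg Subtype.val ((hF.subsingleton_path a b).elim ⟨p, hp⟩ ⟨_, q.bypass_isPath⟩)
  exact hq (q.edges_bypass_subset_edges (hpq ▸ hxy))

end SimpleGraph

section SpanningForest

variable {V : Type*} {G : SimpleGraph V} {T : Finset (Sym2 V)}

lemma IsSpanningForest.fromEdgeSet_le (hT : IsSpanningForest G T) :
    fromEdgeSet (T : Set (Sym2 V)) ≤ G :=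
  (SimpleGraph.fromEdgeSet_le G).mpr (Set.sdiff_subset.trans hT.1)

lemma IsSpanningForest.card_add_card_connectedComponent [Fintype V]
    (hT : IsSpanningForest G T) : T.card + Nat.card G.ConnectedComponent = Fintype.card V := by
  rw [← card_connectedComponent_eq_of_le hT.fromEdgeSet_le hT.2.2]
  exact card_add_card_connectedComponent_of_isAcyclic
    (fun e he => G.not_isDiag_of_mem_edgeSet (hT.1 he)) hT.2.1

lemma IsSpanningForest.exchange [DecidableEq V] (hT : IsSpanningForest G T) {x y c d : V}
    (hxy : s(x, y) ∈ T) (hcd : G.Adj c d)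
    (hcut : ¬(fromEdgeSet (↑(T.erase s(x, y)) : Set (Sym2 V))).Reachable c d) :
    IsSpanningForest G (insert s(c, d) (T.erase s(x, y))) := by
  set K := fromEdgeSet (↑(T.erase s(x, y)) : Set (Sym2 V))
  have hTK : fromEdgeSet (T : Set (Sym2 V)) = K ⊔ edge x y := by
    rw [← fromEdgeSet_insert, ← Finset.coe_insert, Finset.insert_erase hxy]
  refine ⟨?_, ?_, fun u v huv => ?_⟩
  · rw [Finset.coe_insert, Set.insert_subset_iff]
    exact ⟨hcd, (Finset.coe_subset.mpr (Finset.erase_subset _ _)).trans hT.1⟩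
  · rw [Finset.coe_insert, fromEdgeSet_insert]
    exact (hT.2.1.anti (hTK ▸ le_sup_left)).sup_edge_of_not_reachable hcut
  · rw [Finset.coe_insert, fromEdgeSet_insert]
    have hxy' : (K ⊔ edge c d).Reachable x y := by
      rcases reachable_sup_edge_iff.mp (hTK ▸ hT.2.2 c d hcd.reachable) with h | ⟨h₁, h₂⟩ | ⟨h₁, h₂⟩
      · exact absurd h hcut
      · exact reachable_sup_edge_iff.mpr (Or.inr (Or.inl ⟨h₁.symm, h₂.symm⟩))
      · exact reachable_sup_edge_iff.mpr (Or.inr (Or.inr ⟨h₂, h₁⟩))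
    exact reachable_le_sup_edge_of_reachable hxy' _ _ (hTK ▸ hT.2.2 u v huv)

end SpanningForest

section MSF

variable {V : Type*} [DecidableEq V] {G H : SimpleGraph V} {w : Sym2 V → ℝ}
  {T T' : Finset (Sym2 V)}

lemma IsMSF.weight_le_of_exchange (hT : IsMSF G w T) {g f : Sym2 V} (hg : g ∈ T) (hf : f ∉ T)
    (hT' : IsSpanningForest G (insert f (T.erase g))) : w g ≤ w f := by
  have := hT.2 _ hT'
  rw [Finset.sum_insert (fun h => hf (Finset.mem_of_mem_erase h)),
    Finset.sum_erase_eq_sub hg] at this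
  linarith

lemma IsMSF.exists_weight_le_of_walk (hT : IsMSF G w T) {x y : V} (hxy : s(x, y) ∈ T)
    (p : G.Walk x y) : ∃ f ∈ p.edges, w s(x, y) ≤ w f := by
  set K := fromEdgeSet (↑(T.erase s(x, y)) : Set (Sym2 V))
  have hne : x ≠ y := fun h => G.not_isDiag_of_mem_edgeSet (hT.1.1 hxy) (Sym2.mk_isDiag_iff.mpr h)
  have hcut : ¬K.Reachable x y := not_reachable_of_isAcyclic_insert hne
    (by rw [Finset.insert_erase hxy]; exact hT.1.2.1) (Finset.notMem_erase _ _)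
  -- `p` leaves the component of `x` in `T - s(x, y)` along an edge that can replace `s(x, y)`
  obtain ⟨⟨⟨c, d⟩, hcd⟩, hdart, hc, hd⟩ := p.exists_boundary_dart {z | K.Reachable x z} .rfl hcut
  have hcd_cut : ¬K.Reachable c d := fun h => hd (Reachable.trans hc h)
  refine ⟨s(c, d), List.mem_map_of_mem hdart, ?_⟩
  by_cases hf : s(c, d) ∈ T
  · by_cases heq : s(c, d) = s(x, y)
    · rw [heq]
    · exact absurd ((fromEdgeSet_adj _).mpr ⟨Finset.mem_erase.mpr ⟨heq, hf⟩, hcd.ne⟩).reachable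
        hcd_cut
  · exact hT.weight_le_of_exchange hxy hf (hT.1.exchange hxy hcd hcd_cut)

lemma IsMSF.weight_lt_of_mem_path (hinj : Set.InjOn w G.edgeSet) (hT : IsMSF G w T) {a b : V}
    (hab : G.Adj a b) (hnot : s(a, b) ∉ T) {p : (fromEdgeSet (T : Set (Sym2 V))).Walk a b}
    (hp : p.IsPath) {g : Sym2 V} (hg : g ∈ p.edges) : w g < w s(a, b) := by
  induction g using Sym2.ind with | h x y =>
  have hxyT : s(x, y) ∈ T := ((edgeSet_fromEdgeSet _ ▸ p.edges_subset_edgeSet hg).1)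
  have hcut : ¬(fromEdgeSet (↑(T.erase s(x, y)) : Set (Sym2 V))).Reachable a b := by
    rw [Finset.coe_erase, fromEdgeSet_sdiff]
    exact hT.1.2.1.not_reachable_deleteEdges_of_mem_edges hp hg
  refine (hT.weight_le_of_exchange hxyT hnot (hT.1.exchange hxyT hab hcut)).lt_of_ne fun h => ?_
  exact hnot (hinj (hT.1.1 hxyT) hab h ▸ hxyT)

lemma IsMSF.mem_of_le (hinj : Set.InjOn w G.edgeSet) (hHG : H ≤ G) (hT : IsMSF G w T)
    (hT' : IsMSF H w T') {e : Sym2 V} (he : e ∈ T) (heH : e ∈ H.edgeSet) : e ∈ T' := by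
  induction e using Sym2.ind with | h u v =>
  by_contra hnot
  obtain ⟨p, hp⟩ := (hT'.1.2.2 u v (H.mem_edgeSet.mp heH).reachable).exists_isPath
  obtain ⟨f, hf, hle⟩ := hT.exists_weight_le_of_walk he (p.mapLe (hT'.1.fromEdgeSet_le.trans hHG))
  rw [Walk.edges_mapLe_eq_edges] at hf
  have := hT'.weight_lt_of_mem_path (hinj.mono (edgeSet_mono hHG)) heH hnot hp hf
  linarith

lemma IsMSF.inter_eq_filter [DecidablePred (· ∈ H.edgeSet)] (hinj : Set.InjOn w G.edgeSet)
    (hHG : H ≤ G) (hT : IsMSF G w T) (hT' : IsMSF H w T') : T ∩ T' = T.filter (· ∈ H.edgeSet) := by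
  ext e
  rw [Finset.mem_inter, Finset.mem_filter]
  exact ⟨fun h => ⟨h.1, hT'.1.1 h.2⟩, fun h => ⟨h.1, hT.mem_of_le hinj hHG hT' h.1 h.2⟩⟩

end MSF

section Sampling

open Finset

variable {V : Type*} [Fintype V]

lemma card_connectedComponent_fromEdgeSet_edgesWithin (E' : Finset (Sym2 V)) (S : Finset V) :
    Nat.card (fromEdgeSet (edgesWithin E' S)).ConnectedComponent =
      Nat.card ((fromEdgeSet (E' : Set (Sym2 V))).induce (S : Set V)).ConnectedComponent +
        (Fintype.card V - S.card) := by
  have hind : (fromEdgeSet (edgesWithin E' S)).induce (S : Set V) =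
      (fromEdgeSet (E' : Set (Sym2 V))).induce (S : Set V) := by
    ext ⟨a, ha⟩ ⟨b, hb⟩
    simp only [comap_adj, Function.Embedding.coe_subtype, fromEdgeSet_adj, edgesWithin,
      Set.mem_sep_iff]
    refine ⟨fun h => ⟨h.1.1, h.2⟩, fun h => ⟨⟨h.1, fun v hv => ?_⟩, h.2⟩⟩
    rcases Sym2.mem_iff.mp hv with rfl | rfl
    exacts [ha, hb]
  rw [← hind]
  refine card_connectedComponent_eq_card_induce_add fun a b hab => ?_
  exact ((fromEdgeSet_adj _).mp hab).1.2 a (Sym2.mem_mk_left a b)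

lemma IsSpanningForest.card_add_card_connectedComponent_induce {E' T : Finset (Sym2 V)}
    {S : Finset V} (hT : IsSpanningForest (fromEdgeSet (edgesWithin E' S)) T) :
    T.card + Nat.card ((fromEdgeSet (E' : Set (Sym2 V))).induce (S : Set V)).ConnectedComponent =
      S.card := by
  have h := hT.card_add_card_connectedComponent
  rw [card_connectedComponent_fromEdgeSet_edgesWithin] at h
  have := S.card_le_univ
  omega

lemma sum_card_filter_subset_powersetCard [DecidableEq V] {T : Finset (Sym2 V)}
    (hT : ∀ e ∈ T, ¬e.IsDiag) {n : ℕ} (hn : 2 ≤ n) :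
    ∑ S ∈ univ.powersetCard n, (T.filter fun e => ∀ x ∈ e, x ∈ S).card =
      T.card * (Fintype.card V - 2).choose (n - 2) := by
  simp_rw [card_filter]
  rw [sum_comm, ← smul_eq_mul, ← sum_const]
  refine sum_congr rfl fun e he => ?_
  have hsub : ∀ S : Finset V, (∀ x ∈ e, x ∈ S) ↔ e.toFinset ⊆ S := fun S => by
    simp only [subset_iff, Sym2.mem_toFinset]
  simp_rw [hsub, ← card_filter]
  rw [card_filter_powersetCard_subset _ _ _ (subset_univ _)
    ((Sym2.card_toFinset_of_not_isDiag e (hT e he)).trans_le hn),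
    Sym2.card_toFinset_of_not_isDiag e (hT e he), card_univ]

lemma sum_card_inter_msf_edgesWithin [DecidableEq V] {w : Sym2 V → ℝ} {E' T : Finset (Sym2 V)}
    {TS : Finset V → Finset (Sym2 V)} {n : ℕ} (hn : 2 ≤ n)
    (hinj : Set.InjOn w (fromEdgeSet (E' : Set (Sym2 V))).edgeSet)
    (hT : IsMSF (fromEdgeSet (E' : Set (Sym2 V))) w T)
    (hTS : ∀ S ∈ univ.powersetCard n, IsMSF (fromEdgeSet (edgesWithin E' S)) w (TS S)) :
    ∑ S ∈ univ.powersetCard n, (T ∩ TS S).card =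
      T.card * (Fintype.card V - 2).choose (n - 2) := by
  classical
  have hle (S : Finset V) : fromEdgeSet (edgesWithin E' S) ≤ fromEdgeSet (E' : Set (Sym2 V)) :=
    fromEdgeSet_mono fun _ he => he.1
  rw [← sum_card_filter_subset_powersetCard
    (fun e he => (fromEdgeSet (E' : Set (Sym2 V))).not_isDiag_of_mem_edgeSet (hT.1.1 he)) hn]
  refine sum_congr rfl fun S hS => ?_
  rw [hT.inter_eq_filter hinj (hle S) (hTS S hS)]
  congr 1
  refine filter_congr fun e he => ?_
  have he' := hT.1.1 he
  rw [edgeSet_fromEdgeSet] at he' ⊢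
  exact ⟨fun h => h.1.2, fun h => ⟨⟨he'.1, h⟩, he'.2⟩⟩

lemma sum_sum_card_inter_msf [DecidableEq V] {w : Sym2 V → ℝ}
    (hinj : Set.InjOn w (⊤ : SimpleGraph V).edgeSet) {n : ℕ} (hn : 2 ≤ n)
    {𝒜 : Finset (Finset (Sym2 V))} {μ : Finset (Sym2 V) → ℝ} (hμ : ∑ E' ∈ 𝒜, μ E' = 1)
    {T' : Finset (Sym2 V) → Finset (Sym2 V)}
    (hT' : ∀ E' ∈ 𝒜, IsMSF (fromEdgeSet (E' : Set (Sym2 V))) w (T' E'))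
    {TS : Finset (Sym2 V) → Finset V → Finset (Sym2 V)}
    (hTS : ∀ E' ∈ 𝒜, ∀ S ∈ univ.powersetCard n, IsMSF (fromEdgeSet (edgesWithin E' S)) w (TS E' S))
    (M : ℝ) :
    ∑ E' ∈ 𝒜, ∑ S ∈ univ.powersetCard n,
        μ E' * (1 / ((Fintype.card V).choose n : ℝ)) * ((T' E' ∩ TS E' S).card / M) =
      (Fintype.card V - 2).choose (n - 2) / ((Fintype.card V).choose n : ℝ) *
        (Fintype.card V - ∑ E' ∈ 𝒜,
          μ E' * Nat.card (fromEdgeSet (E' : Set (Sym2 V))).ConnectedComponent) / M := by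
  have hinner (E' : Finset (Sym2 V)) (hE' : E' ∈ 𝒜) :
      ∑ S ∈ univ.powersetCard n,
          μ E' * (1 / ((Fintype.card V).choose n : ℝ)) * ((T' E' ∩ TS E' S).card / M) =
        (Fintype.card V - 2).choose (n - 2) / ((Fintype.card V).choose n : ℝ) *
          (Fintype.card V * μ E' -
            μ E' * Nat.card (fromEdgeSet (E' : Set (Sym2 V))).ConnectedComponent) / M := by
    have hK : ((T' E').card : ℝ) = Fintype.card V -
        Nat.card (fromEdgeSet (E' : Set (Sym2 V))).ConnectedComponent := by
      rw [← (hT' E' hE').1.card_add_card_connectedComponent]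
      push_cast
      ring
    rw [← mul_sum, ← sum_div, ← Nat.cast_sum, sum_card_inter_msf_edgesWithin hn
      (hinj.mono (edgeSet_mono le_top)) (hT' E' hE') (hTS E' hE'), Nat.cast_mul, hK]
    ring
  rw [sum_congr rfl hinner, ← sum_div, ← mul_sum, sum_sub_distrib, ← mul_sum, hμ, mul_one]

lemma sum_sum_card_spanningForest {n : ℕ} (hn : n ≤ Fintype.card V) {𝒜 : Finset (Finset (Sym2 V))}
    {μ : Finset (Sym2 V) → ℝ} (hμ : ∑ E' ∈ 𝒜, μ E' = 1)
    {TS : Finset (Sym2 V) → Finset V → Finset (Sym2 V)}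
    (hTS : ∀ E' ∈ 𝒜, ∀ S ∈ (univ : Finset V).powersetCard n,
      IsSpanningForest (fromEdgeSet (edgesWithin E' S)) (TS E' S))
    (M : ℝ) :
    ∑ E' ∈ 𝒜, ∑ S ∈ (univ : Finset V).powersetCard n,
        μ E' * (1 / ((Fintype.card V).choose n : ℝ)) * ((TS E' S).card / M) =
      (n - ∑ E' ∈ 𝒜, ∑ S ∈ (univ : Finset V).powersetCard n,
        μ E' * (1 / ((Fintype.card V).choose n : ℝ)) *
          Nat.card ((fromEdgeSet (E' : Set (Sym2 V))).induce (S : Set V)).ConnectedComponent) /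
        M := by
  have hinner (E' : Finset (Sym2 V)) (hE' : E' ∈ 𝒜) (S : Finset V)
      (hS : S ∈ (univ : Finset V).powersetCard n) :
      μ E' * (1 / ((Fintype.card V).choose n : ℝ)) * ((TS E' S).card / M) =
        (n * (μ E' * (1 / ((Fintype.card V).choose n : ℝ))) -
          μ E' * (1 / ((Fintype.card V).choose n : ℝ)) *
            Nat.card ((fromEdgeSet (E' : Set (Sym2 V))).induce (S : Set V)).ConnectedComponent) /
          M := by
    rw [← (mem_powersetCard.mp hS).2, ← (hTS E' hE' S hS).card_add_card_connectedComponent_induce]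
    push_cast
    ring
  have hmass : ∑ E' ∈ 𝒜, ∑ _S ∈ (univ : Finset V).powersetCard n,
      n * (μ E' * (1 / ((Fintype.card V).choose n : ℝ))) = n := by
    have hC : ((Fintype.card V).choose n : ℝ) ≠ 0 := Nat.cast_ne_zero.mpr (Nat.choose_pos hn).ne'
    simp only [sum_const, card_powersetCard, card_univ, nsmul_eq_mul]
    rw [← mul_sum, ← mul_sum, ← sum_mul, hμ]
    field_simp
  rw [sum_congr rfl fun E' hE' => sum_congr rfl (hinner E' hE')]
  simp only [← sum_div, sum_sub_distrib, hmass]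

end Sampling

lemma Nat.cast_choose_sub_two_div_choose {N n : ℕ} (hn : 2 ≤ n) (hnN : n ≤ N) :
    ((N - 2).choose (n - 2) : ℝ) / N.choose n = n * (n - 1) / (N * (N - 1)) := by
  have h := congrArg (Nat.cast : ℕ → ℝ) (Nat.choose_mul (n := N) hn)
  push_cast [Nat.cast_choose_two] at h
  have hC : (N.choose n : ℝ) ≠ 0 := Nat.cast_ne_zero.mpr (Nat.choose_pos hnN).ne'
  have hN : (N : ℝ) * (N - 1) ≠ 0 := by
    have : (2 : ℝ) ≤ N := by exact_mod_cast hn.trans hnN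
    exact mul_ne_zero (by linarith) (by linarith)
  rw [div_eq_div_iff hC hN]
  linarith

theorem gnp_ppv_general {V : Type*} [Fintype V] [DecidableEq V]
    (w : Sym2 V → ℝ) (N n : ℕ) (p : ℝ)
    (hN : Fintype.card V = N) (hn : 2 ≤ n) (hnN : n ≤ N)
    (hinj : Set.InjOn w (⊤ : SimpleGraph V).edgeSet)
    (T' : Finset (Sym2 V) → Finset (Sym2 V))
    (hT' : ∀ E' ∈ (⊤ : SimpleGraph V).edgeFinset.powerset,
      IsMSF (SimpleGraph.fromEdgeSet (E' : Set (Sym2 V))) w (T' E'))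
    (TS : Finset (Sym2 V) → Finset V → Finset (Sym2 V))
    (hTS : ∀ E' ∈ (⊤ : SimpleGraph V).edgeFinset.powerset,
      ∀ S ∈ Finset.univ.powersetCard n,
        IsMSF (SimpleGraph.fromEdgeSet (edgesWithin E' S)) w (TS E' S))
    -- the probability of each realization `E'` of the random edge set
    (μ : Finset (Sym2 V) → ℝ)
    (hμ : ∀ E', μ E' =
      p ^ E'.card * (1 - p) ^ ((⊤ : SimpleGraph V).edgeFinset.card - E'.card))
    -- `E(K')`: the expected number of connected components of `G'`
    (EK' : ℝ)
    (hEK' : EK' = ∑ E' ∈ (⊤ : SimpleGraph V).edgeFinset.powerset,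
      μ E' * (Nat.card (SimpleGraph.fromEdgeSet (E' : Set (Sym2 V))).ConnectedComponent : ℝ))
    -- `E(K'_S)`: the expected number of connected components of the subgraph of `G'`
    -- induced by the uniformly random `n`-subset `S`
    (EKS : ℝ)
    (hEKS : EKS = ∑ E' ∈ (⊤ : SimpleGraph V).edgeFinset.powerset,
      ∑ S ∈ Finset.powersetCard n (Finset.univ : Finset V),
        μ E' * (1 / (N.choose n : ℝ)) *
          (Nat.card (SimpleGraph.induce (↑S : Set V)
            (SimpleGraph.fromEdgeSet (E' : Set (Sym2 V)))).ConnectedComponent : ℝ))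
    -- `P(e ∈ T' ∩ T'_S)` for `e` uniform on `E`, jointly with `E'` and `S`
    (Pnum : ℝ)
    (hPnum : Pnum = ∑ E' ∈ (⊤ : SimpleGraph V).edgeFinset.powerset,
      ∑ S ∈ Finset.univ.powersetCard n,
        μ E' * (1 / (N.choose n : ℝ)) *
          (((T' E' ∩ TS E' S).card : ℝ) / ((⊤ : SimpleGraph V).edgeFinset.card : ℝ)))
    -- `P(e ∈ T'_S)` for `e` uniform on `E`, jointly with `E'` and `S`
    (Pden : ℝ)
    (hPden : Pden = ∑ E' ∈ (⊤ : SimpleGraph V).edgeFinset.powerset,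
      ∑ S ∈ Finset.univ.powersetCard n,
        μ E' * (1 / (N.choose n : ℝ)) *
          (((TS E' S).card : ℝ) / ((⊤ : SimpleGraph V).edgeFinset.card : ℝ))) :
    Pnum / Pden =
      ((n : ℝ) * ((n : ℝ) - 1)) / ((N : ℝ) * ((N : ℝ) - 1)) *
        (((N : ℝ) - EK') / ((n : ℝ) - EKS)) := by
  subst hN
  have hM : ((⊤ : SimpleGraph V).edgeFinset.card : ℝ) ≠ 0 := by
    rw [card_edgeFinset_top_eq_card_choose_two]
    exact Nat.cast_ne_zero.mpr (Nat.choose_pos (hn.trans hnN)).ne'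
  have hμ₁ : ∑ E' ∈ (⊤ : SimpleGraph V).edgeFinset.powerset, μ E' = 1 := by
    simp_rw [hμ]
    rw [Finset.sum_pow_mul_eq_add_pow, add_sub_cancel, one_pow]
  rw [hPnum, hPden, hEK', hEKS, sum_sum_card_inter_msf hinj hn hμ₁ hT' hTS,
    sum_sum_card_spanningForest hnN hμ₁ (fun E' hE' S hS => (hTS E' hE' S hS).1),
    div_div_div_cancel_right₀ hM, mul_div_assoc, Nat.cast_choose_sub_two_div_choose hn hnN]

/-- Let `G` be the complete graph on `N` vertices with distinct positive edge weights and
`2 ≤ n ≤ N`, `p ∈ (0,1]`.  Each edge is kept independently with probability `p`, giving a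
random edge set `E'`; `T' E'` and `K'` denote the MSF and the number of connected
components of `G' = (V, E')`.  Independently, `S` is a uniformly random `n`-subset of
the vertices; `TS E' S` and `K'_S` denote the MSF and the number of connected components
of the subgraph of `G'` induced by `S`.  For an edge `e` uniform on `E` and independent
of `(E', S)`,
`P(e ∈ T' ∣ e ∈ T'_S) = n(n-1)/(N(N-1)) · (N - E K')/(n - E K'_S)`,
where all probabilities/expectations (here written out as weighted sums over all
configurations of `E'` and `S`) are over the joint distribution of `E'`, `S` and `e`. -/
theorem gnp_ppv {V : Type*} [Fintype V] [DecidableEq V]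
    (w : Sym2 V → ℝ) (N n : ℕ) (p : ℝ)
    (hN : Fintype.card V = N) (hn : 2 ≤ n) (hnN : n ≤ N)
    (hp0 : 0 < p) (hp1 : p ≤ 1)
    (hpos : ∀ e ∈ (⊤ : SimpleGraph V).edgeSet, 0 < w e)
    (hinj : Set.InjOn w (⊤ : SimpleGraph V).edgeSet)
    (T' : Finset (Sym2 V) → Finset (Sym2 V))
    (hT' : ∀ E' ∈ (⊤ : SimpleGraph V).edgeFinset.powerset,
      IsMSF (SimpleGraph.fromEdgeSet (E' : Set (Sym2 V))) w (T' E'))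
    (TS : Finset (Sym2 V) → Finset V → Finset (Sym2 V))
    (hTS : ∀ E' ∈ (⊤ : SimpleGraph V).edgeFinset.powerset,
      ∀ S ∈ Finset.univ.powersetCard n,
        IsMSF (SimpleGraph.fromEdgeSet (edgesWithin E' S)) w (TS E' S))
    -- the probability of each realization `E'` of the random edge set
    (μ : Finset (Sym2 V) → ℝ)
    (hμ : ∀ E', μ E' =
      p ^ E'.card * (1 - p) ^ ((⊤ : SimpleGraph V).edgeFinset.card - E'.card))
    -- `E(K')`: the expected number of connected components of `G'`
    (EK' : ℝ)
    (hEK' : EK' = ∑ E' ∈ (⊤ : SimpleGraph V).edgeFinset.powerset,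
      μ E' * (Nat.card (SimpleGraph.fromEdgeSet (E' : Set (Sym2 V))).ConnectedComponent : ℝ))
    -- `E(K'_S)`: the expected number of connected components of the subgraph of `G'`
    -- induced by the uniformly random `n`-subset `S`
    (EKS : ℝ)
    (hEKS : EKS = ∑ E' ∈ (⊤ : SimpleGraph V).edgeFinset.powerset,
      ∑ S ∈ Finset.powersetCard n (Finset.univ : Finset V),
        μ E' * (1 / (N.choose n : ℝ)) *
          (Nat.card (SimpleGraph.induce (↑S : Set V)
            (SimpleGraph.fromEdgeSet (E' : Set (Sym2 V)))).ConnectedComponent : ℝ))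
    -- `P(e ∈ T' ∩ T'_S)` for `e` uniform on `E`, jointly with `E'` and `S`
    (Pnum : ℝ)
    (hPnum : Pnum = ∑ E' ∈ (⊤ : SimpleGraph V).edgeFinset.powerset,
      ∑ S ∈ Finset.univ.powersetCard n,
        μ E' * (1 / (N.choose n : ℝ)) *
          (((T' E' ∩ TS E' S).card : ℝ) / ((⊤ : SimpleGraph V).edgeFinset.card : ℝ)))
    -- `P(e ∈ T'_S)` for `e` uniform on `E`, jointly with `E'` and `S`
    (Pden : ℝ)
    (hPden : Pden = ∑ E' ∈ (⊤ : SimpleGraph V).edgeFinset.powerset,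
      ∑ S ∈ Finset.univ.powersetCard n,
        μ E' * (1 / (N.choose n : ℝ)) *
          (((TS E' S).card : ℝ) / ((⊤ : SimpleGraph V).edgeFinset.card : ℝ))) :
    Pnum / Pden =
      ((n : ℝ) * ((n : ℝ) - 1)) / ((N : ℝ) * ((N : ℝ) - 1)) *
        (((N : ℝ) - EK') / ((n : ℝ) - EKS)) :=
  gnp_ppv_general w N n p hN hn hnN hinj T' hT' TS hTS μ hμ EK' hEK' EKS hEKS Pnum hPnum Pden hPden
end

section
/- Let G = (V,E) be a finite connected weighted undirected simple graph, let A and B be two minimum spanning trees of G, and let a ∈ A \ B. Then there exists an edge b ∈ B \ A with w(b) = w(a) such that (A \ {a}) ∪ {b} is also a minimum spanning tree of G. -/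
/-- `T` is a spanning tree of `G`: an acyclic set of edges of `G` such that every vertex
is an endpoint of some edge in `T` and the graph `(V, T)` is connected. -/
def IsSpanningTree {V : Type*} (G : SimpleGraph V) (T : Finset (Sym2 V)) : Prop :=
  (T : Set (Sym2 V)) ⊆ G.edgeSet ∧
    (∀ v : V, ∃ e ∈ T, v ∈ e) ∧
    (SimpleGraph.fromEdgeSet (T : Set (Sym2 V))).IsAcyclic ∧
    (SimpleGraph.fromEdgeSet (T : Set (Sym2 V))).Connected

/-- `T` is a minimum spanning tree of `G` with respect to the weights `w`. -/
def IsMST {V : Type*} (G : SimpleGraph V) (w : Sym2 V → ℝ) (T : Finset (Sym2 V)) : Prop :=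
  IsSpanningTree G T ∧
    ∀ T' : Finset (Sym2 V), IsSpanningTree G T' → ∑ e ∈ T, w e ≤ ∑ e ∈ T', w e

/-!
Write `a = s(x, y)`. Deleting `a` from `A` splits the vertices into the part reachable from `x`
and the part reachable from `y`; the `B`-path from `x` to `y` crosses this cut along an edge
`b ∉ A`. Adding `b` reconnects the two parts, so `A - a + b` is a spanning tree; and since `b`
lies on the unique `B`-path between the endpoints of `a`, deleting `b` from `B` separates them,
so `B - b + a` is a spanning tree as well. Minimality of `A` and of `B` then gives
`w a ≤ w b ≤ w a`.
-/

namespace SimpleGraph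

variable {V : Type*} {G : SimpleGraph V}

theorem IsAcyclic.not_reachable_deleteEdges_of_mem_edges_s11 (hG : G.IsAcyclic) {u v : V}
    {p : G.Walk u v} (hp : p.IsPath) {e : Sym2 V} (he : e ∈ p.edges) :
    ¬ (G.deleteEdges {e}).Reachable u v := by
  classical
  rintro ⟨q⟩
  have hq : e ∉ ((q.mapLe (G.deleteEdges_le _)).toPath : G.Walk u v).edges := fun h ↦ by
    have h' := Walk.edges_toPath_subset_edges _ h
    rw [Walk.edges_mapLe_eq_edges] at h'
    simpa [edgeSet_deleteEdges] using q.edges_subset_edgeSet h'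
  rw [← (hG.subsingleton_path u v).elim ⟨p, hp⟩ (q.mapLe (G.deleteEdges_le _)).toPath] at hq
  exact hq he

theorem Connected.reachable_or_reachable_deleteEdges (hG : G.Connected) (x y z : V) :
    (G.deleteEdges {s(x, y)}).Reachable x z ∨ (G.deleteEdges {s(x, y)}).Reachable y z := by
  classical
  obtain ⟨P, hP⟩ := hG.exists_isPath z x
  by_cases heP : s(x, y) ∈ P.edges
  · have hyP := P.snd_mem_support_of_mem_edges heP
    have hxP := Walk.endpoint_notMem_support_takeUntil hP hyP (P.adj_of_mem_edges heP).ne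
    refine .inr (.symm ⟨(P.takeUntil y hyP).toDeleteEdges {s(x, y)} fun e he he' ↦ ?_⟩)
    rw [Set.mem_singleton_iff] at he'
    exact hxP ((P.takeUntil y hyP).fst_mem_support_of_mem_edges (he' ▸ he))
  · refine .inl (.symm ⟨P.toDeleteEdges {s(x, y)} fun e he he' ↦ ?_⟩)
    exact heP (Set.mem_singleton_iff.mp he' ▸ he)

theorem Connected.sup_edge_deleteEdges (hG : G.Connected) {x y u v : V}
    (huv : ¬ (G.deleteEdges {s(x, y)}).Reachable u v) :
    (G.deleteEdges {s(x, y)} ⊔ edge u v).Connected := by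
  set H := G.deleteEdges {s(x, y)}
  have hle : H ≤ H ⊔ edge u v := le_sup_left
  have hu_v : (H ⊔ edge u v).Reachable u v := Reachable.mono le_sup_right <|
    Adj.reachable <| (edge_adj ..).2 ⟨.inl ⟨rfl, rfl⟩, by rintro rfl; exact huv .rfl⟩
  have hx_y : (H ⊔ edge u v).Reachable x y := by
    rcases hG.reachable_or_reachable_deleteEdges x y u with hu | hu <;>
      rcases hG.reachable_or_reachable_deleteEdges x y v with hv | hv
    · exact absurd (hu.symm.trans hv) huv
    · exact (hu.mono hle).trans (hu_v.trans (hv.mono hle).symm)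
    · exact (hv.mono hle).trans (hu_v.symm.trans (hu.mono hle).symm)
    · exact absurd (hu.symm.trans hv) huv
  refine (connected_iff_exists_forall_reachable _).2 ⟨x, fun z ↦ ?_⟩
  rcases hG.reachable_or_reachable_deleteEdges x y z with hz | hz
  · exact hz.mono hle
  · exact hx_y.trans (hz.mono hle)

theorem IsTree.sup_edge_deleteEdges (hG : G.IsTree) {x y u v : V}
    (huv : ¬ (G.deleteEdges {s(x, y)}).Reachable u v) :
    (G.deleteEdges {s(x, y)} ⊔ edge u v).IsTree :=
  ⟨hG.connected.sup_edge_deleteEdges huv,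
    (hG.isAcyclic.anti (G.deleteEdges_le _)).sup_edge_of_not_reachable huv⟩

end SimpleGraph

open SimpleGraph

section Exchange

variable {V : Type*} [DecidableEq V] {G : SimpleGraph V}

theorem fromEdgeSet_insert_erase (T : Finset (Sym2 V)) (e : Sym2 V) (u v : V) :
    fromEdgeSet (↑(insert s(u, v) (T.erase e)) : Set (Sym2 V)) =
      (fromEdgeSet (T : Set (Sym2 V))).deleteEdges {e} ⊔ edge u v := by
  rw [Finset.coe_insert, Finset.coe_erase, Set.insert_eq, Set.union_comm, fromEdgeSet_union,
    deleteEdges_fromEdgeSet, edge]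

theorem IsSpanningTree.insert_erase {T : Finset (Sym2 V)} (hT : IsSpanningTree G T)
    {x y u v : V} (hf : s(u, v) ∈ G.edgeSet)
    (huv : ¬ ((fromEdgeSet (T : Set (Sym2 V))).deleteEdges {s(x, y)}).Reachable u v) :
    IsSpanningTree G (insert s(u, v) (T.erase s(x, y))) := by
  obtain ⟨hsub, -, hac, hconn⟩ := hT
  have htree := IsTree.sup_edge_deleteEdges ⟨hconn, hac⟩ huv
  rw [← fromEdgeSet_insert_erase] at htree
  have : Nontrivial V := ⟨u, v, G.ne_of_adj hf⟩
  refine ⟨?_, fun z ↦ ?_, htree.isAcyclic, htree.connected⟩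
  · intro g hg
    simp only [Finset.coe_insert, Finset.coe_erase, Set.mem_insert_iff, Set.mem_sdiff] at hg
    rcases hg with rfl | ⟨hg, -⟩
    exacts [hf, hsub hg]
  · obtain ⟨z', hz⟩ := htree.connected.preconnected.exists_adj_of_nontrivial z
    exact ⟨s(z, z'), ((fromEdgeSet_adj _).1 hz).1, Sym2.mem_mk_left _ _⟩

theorem IsSpanningTree.exists_symmetric_exchange {A B : Finset (Sym2 V)}
    (hA : IsSpanningTree G A) (hB : IsSpanningTree G B) {a : Sym2 V} (ha : a ∈ A \ B) :
    ∃ b ∈ B \ A, IsSpanningTree G (insert b (A.erase a)) ∧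
      IsSpanningTree G (insert a (B.erase b)) := by
  induction a with | h x y => ?_
  obtain ⟨haA, haB⟩ := Finset.mem_sdiff.1 ha
  set A' := (fromEdgeSet (A : Set (Sym2 V))).deleteEdges {s(x, y)}
  have hsep : ¬ A'.Reachable x y := isBridge_iff.1 <| isAcyclic_iff_forall_isBridge.1 hA.2.2.1 <|
    by simpa [edgeSet_fromEdgeSet, haA] using G.ne_of_adj (hA.1 haA)
  obtain ⟨p, hp⟩ := hB.2.2.2.exists_isPath x y
  obtain ⟨d, hd, hxu, hxv⟩ := p.exists_boundary_dart {z | A'.Reachable x z} .rfl hsep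
  have huv : ¬ A'.Reachable d.fst d.snd := fun h ↦ hxv (hxu.trans h)
  have hbB : s(d.fst, d.snd) ∈ B := by simpa using ((fromEdgeSet_adj _).1 d.adj).1
  have hbA : s(d.fst, d.snd) ∉ A := fun h ↦ huv <| Adj.reachable <| by
    have hne : s(d.fst, d.snd) ≠ s(x, y) := fun h' ↦ haB (h' ▸ hbB)
    simp only [A', deleteEdges_adj, fromEdgeSet_adj, Finset.mem_coe, Set.mem_singleton_iff]
    exact ⟨⟨h, d.adj.ne⟩, hne⟩
  refine ⟨s(d.fst, d.snd), Finset.mem_sdiff.2 ⟨hbB, hbA⟩, hA.insert_erase (hB.1 hbB) huv,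
    hB.insert_erase (hA.1 haA) ?_⟩
  exact hB.2.2.1.not_reachable_deleteEdges_of_mem_edges_s11 hp (List.mem_map_of_mem hd)

theorem Finset.sum_insert_erase {ι M : Type*} [DecidableEq ι] [AddCommGroup M] {T : Finset ι}
    {e f : ι} (he : e ∈ T) (hf : f ∉ T) (w : ι → M) :
    ∑ g ∈ insert f (T.erase e), w g = ∑ g ∈ T, w g - w e + w f := by
  rw [Finset.sum_insert (mt Finset.mem_of_mem_erase hf), Finset.sum_erase_eq_sub he]
  abel

variable {w : Sym2 V → ℝ} {T : Finset (Sym2 V)} {e f : Sym2 V}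

theorem IsMST.weight_le_of_isSpanningTree_insert_erase (hT : IsMST G w T) (he : e ∈ T)
    (hf : f ∉ T) (h : IsSpanningTree G (insert f (T.erase e))) : w e ≤ w f := by
  have := hT.2 _ h
  rw [Finset.sum_insert_erase he hf] at this
  linarith

theorem IsMST.insert_erase_of_weight_eq (hT : IsMST G w T) (he : e ∈ T) (hf : f ∉ T)
    (h : IsSpanningTree G (insert f (T.erase e))) (hw : w f = w e) :
    IsMST G w (insert f (T.erase e)) :=
  ⟨h, fun T' hT' ↦ by
    rw [Finset.sum_insert_erase he hf, hw, sub_add_cancel]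
    exact hT.2 T' hT'⟩

end Exchange

theorem mst_exchange_step_general {V : Type*} [DecidableEq V]
    (G : SimpleGraph V) (w : Sym2 V → ℝ)
    (A B : Finset (Sym2 V)) (hA : IsMST G w A) (hB : IsMST G w B)
    (a : Sym2 V) (ha : a ∈ A \ B) :
    ∃ b ∈ B \ A, w b = w a ∧ IsMST G w (insert b (A.erase a)) := by
  obtain ⟨b, hb, hA', hB'⟩ := hA.1.exists_symmetric_exchange hB.1 ha
  obtain ⟨haA, haB⟩ := Finset.mem_sdiff.1 ha
  obtain ⟨hbB, hbA⟩ := Finset.mem_sdiff.1 hb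
  have hw : w b = w a := le_antisymm (hB.weight_le_of_isSpanningTree_insert_erase hbB haB hB')
    (hA.weight_le_of_isSpanningTree_insert_erase haA hbA hA')
  exact ⟨b, hb, hw, hA.insert_erase_of_weight_eq haA hbA hA' hw⟩

/-- If `A` and `B` are MSTs of a finite connected weighted graph and `a ∈ A \ B`, then
there is an edge `b ∈ B \ A` of the same weight as `a` such that `(A \ {a}) ∪ {b}` is
again an MST. -/
theorem mst_exchange_step {V : Type*} [Fintype V] [DecidableEq V]
    (G : SimpleGraph V) (hG : G.Connected) (w : Sym2 V → ℝ)
    (hpos : ∀ e ∈ G.edgeSet, 0 < w e)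
    (A B : Finset (Sym2 V)) (hA : IsMST G w A) (hB : IsMST G w B)
    (a : Sym2 V) (ha : a ∈ A \ B) :
    ∃ b ∈ B \ A, w b = w a ∧ IsMST G w (insert b (A.erase a)) :=
  mst_exchange_step_general G w A B hA hB a ha
end
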